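/- arXiv:2205.11909 — 16 statements merged into one kernel-verified Lean document; each statement's English description precedes it below -/
import Mathlib

section
/- If a is core invertible with core inverse x, then the right annihilator of a* equals the right annihilator of x, i.e., for all y in R, a*y = 0 if and only if xy = 0. -/
variable {R : Type*} [Ring R] [StarRing R]

def IsCoreInverse (a x : R) : Prop :=
  a * x * a = a ∧ x * a * x = x ∧ star (a * x) = a * x ∧ x * a ^ 2 = a ∧ a * x ^ 2 = x

theorem stmt0 (a x : R) (h : IsCoreInverse a x) :
    ∀ y : R, star a * y = 0 ↔ x * y = 0 := by
  obtain ⟨h1, h2, h3, -, -⟩ := h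
  intro y
  constructor
  · intro hy
    have hx : x = x * star x * star a := by
      calc x = x * (a * x) := by rw [mul_assoc] at h2; exact h2.symm
        _ = x * star (a * x) := by rw [h3]
        _ = x * star x * star a := by rw [star_mul, mul_assoc]
    calc x * y = x * star x * star a * y := by rw [← hx]
      _ = x * star x * (star a * y) := by rw [mul_assoc]
      _ = 0 := by rw [hy, mul_zero]
  · intro hy
    have ha : star a = star a * a * x := by
      calc star a = star (a * x * a) := by rw [h1]
        _ = star a * star (a * x) := by rw [star_mul]
        _ = star a * (a * x) := by rw [h3]
        _ = star a * a * x := by rw [mul_assoc]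
    calc star a * y = star a * a * x * y := by rw [← ha]
      _ = star a * a * (x * y) := by rw [mul_assoc]
      _ = 0 := by rw [hy, mul_zero]
end

section
/- If a is core invertible with core inverse x, then the left annihilator of x* equals the left annihilator of a, i.e., for all y in R, yx* = 0 if and only if ya = 0. -/
variable {R : Type*} [Ring R] [StarRing R]

theorem stmt1 (a x : R) (h : IsCoreInverse a x) :
    ∀ y : R, y * star x = 0 ↔ y * a = 0 := by
  obtain ⟨h1, h2, h3, -, -⟩ := h
  have hax : star x * star a = a * x := by rw [← star_mul, h3]
  intro y
  constructor
  · intro hy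
    have ha : y * a = y * star x * (star a * a) := by
      rw [mul_assoc y, ← mul_assoc (star x), hax, h1]
    rw [ha, hy, zero_mul]
  · intro hy
    have hx : y * star x = y * a * (x * star x) := by
      conv_lhs => rw [← h2]
      rw [star_mul, star_mul, ← mul_assoc (star x), hax]
      noncomm_ring
    rw [hx, hy, zero_mul]
end

section
/- If a is core invertible with core inverse x, then for all b in R, the left annihilator of b·x* equals the left annihilator of b·a: for all y in R, y·b·x* = 0 if and only if y·b·a = 0. -/
variable {R : Type*} [Ring R] [StarRing R]

theorem stmt5 (a x : R) (h : IsCoreInverse a x) :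
    ∀ b y : R, y * (b * star x) = 0 ↔ y * (b * a) = 0 := by
  obtain ⟨h1, h2, h3, _, _⟩ := h
  have ha : a = star x * (star a * a) := by
    calc a = a * x * a := h1.symm
    _ = star (a * x) * a := by rw [h3]
    _ = star x * (star a * a) := by rw [star_mul]; noncomm_ring
  have hx : star x = a * (x * star x) := by
    calc star x = star (x * a * x) := by rw [h2]
    _ = star (a * x) * star x := by rw [mul_assoc, star_mul]
    _ = a * (x * star x) := by rw [h3]; noncomm_ring
  intro b y
  constructor
  · intro hy
    calc y * (b * a) = y * (b * (star x * (star a * a))) := by rw [← ha]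
      _ = y * (b * star x) * (star a * a) := by noncomm_ring
      _ = 0 := by rw [hy, zero_mul]
  · intro hy
    calc y * (b * star x) = y * (b * (a * (x * star x))) := by rw [← hx]
      _ = y * (b * a) * (x * star x) := by noncomm_ring
      _ = 0 := by rw [hy, zero_mul]
end

section
/- Let a and b be core invertible elements with core inverses x and y respectively. If aba = ba² = a²b, abx = axb, and aby = bya, then xy is the core inverse of ab. -/
variable {R : Type*} [Ring R] [StarRing R]

theorem stmt6 (a b x y : R) (ha : IsCoreInverse a x) (hb : IsCoreInverse b y)
    (h1 : a * b * a = b * a ^ 2) (h2 : b * a ^ 2 = a ^ 2 * b)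
    (h3 : a * b * x = a * x * b) (h4 : a * b * y = b * y * a) :
    IsCoreInverse (a * b) (x * y) := by
  obtain ⟨ha1, ha2, ha3, ha4, ha5⟩ := ha
  obtain ⟨hb1, hb2, hb3, hb4, hb5⟩ := hb
  rw [pow_two] at ha4 ha5 hb4 hb5 h1 h2
  rw [← mul_assoc] at ha4 ha5 hb4 hb5 h1 h2
  -- ha4 : x*a*a = a, ha5 : a*x*x = x, hb4 : y*b*b = b, hb5 : b*y*y = y
  -- h1 : a*b*a = b*a*a, h2 : b*a*a = a*a*b
  have hfa : a * (b * y) = b * y * a := by rw [← mul_assoc, h4]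
  -- g = x*x*a facts
  have hag : a * (x * x * a) = x * a := by
    calc a * (x * x * a) = a * x * x * a := by simp only [mul_assoc]
      _ = x * a := by rw [ha5]
  have hga : x * x * a * a = x * a := by
    calc x * x * a * a = x * (x * a * a) := by simp only [mul_assoc]
      _ = x * a := by rw [ha4]
  have haga : a * (x * x * a) * a = a := by rw [hag, ha4]
  have hpg : x * a * (x * x * a) = x * x * a := by
    calc x * a * (x * x * a) = x * a * x * (x * a) := by simp only [mul_assoc]
      _ = x * (x * a) := by rw [ha2]
      _ = x * x * a := by simp only [mul_assoc]
  have hgp : x * x * a * (x * a) = x * x * a := by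
    calc x * x * a * (x * a) = x * (x * a * x) * a := by simp only [mul_assoc]
      _ = x * x * a := by rw [ha2]
  have hge : x * x * a * (a * x) = x := by
    calc x * x * a * (a * x) = x * (x * a * a) * x := by simp only [mul_assoc]
      _ = x * a * x := by rw [ha4]
      _ = x := ha2
  -- e f e = f e
  have d2 : a * x * (b * y) * (a * x) = b * y * (a * x) := by
    calc a * x * (b * y) * (a * x) = a * x * (b * y * a) * x := by simp only [mul_assoc]
      _ = a * x * (a * (b * y)) * x := by rw [hfa]
      _ = a * x * a * (b * y * x) := by simp only [mul_assoc]
      _ = a * (b * y * x) := by rw [ha1]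
      _ = a * (b * y) * x := by simp only [mul_assoc]
      _ = b * y * a * x := by rw [hfa]
      _ = b * y * (a * x) := by simp only [mul_assoc]
  -- e f = f e
  have d4 : a * x * (b * y) = b * y * (a * x) := by
    have hsym : star (b * y * (a * x)) = a * x * (b * y) := by
      rw [star_mul (b * y) (a * x), ha3, hb3]
    calc a * x * (b * y) = star (b * y * (a * x)) := hsym.symm
      _ = star (a * x * (b * y) * (a * x)) := by rw [d2]
      _ = star (a * x) * (star (b * y) * star (a * x)) := by
          rw [star_mul (a * x * (b * y)) (a * x), star_mul (a * x) (b * y)]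
      _ = a * x * (b * y * (a * x)) := by rw [ha3, hb3]
      _ = a * x * (b * y) * (a * x) := by simp only [mul_assoc]
      _ = b * y * (a * x) := d2
  -- f p = p f  where p = x*a
  have hfp : b * y * (x * a) = x * a * (b * y) := by
    calc b * y * (x * a) = b * y * (a * (x * x * a)) := by rw [hag]
      _ = b * y * a * (x * x * a) := by simp only [mul_assoc]
      _ = a * (b * y) * (x * x * a) := by rw [hfa]
      _ = a * (x * x * a) * a * (b * y) * (x * x * a) := by rw [haga]
      _ = a * (x * x * a) * (a * (b * y)) * (x * x * a) := by simp only [mul_assoc]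
      _ = a * (x * x * a) * (b * y * a) * (x * x * a) := by rw [hfa]
      _ = a * (x * x * a) * (b * y) * (a * (x * x * a)) := by simp only [mul_assoc]
      _ = x * a * (b * y) * (x * a) := by rw [hag]
      _ = x * (a * (b * y)) * (x * a) := by simp only [mul_assoc]
      _ = x * (b * y * a) * (x * a) := by rw [hfa]
      _ = x * (b * y) * (a * x * a) := by simp only [mul_assoc]
      _ = x * (b * y) * a := by rw [ha1]
      _ = x * (b * y * a) := by simp only [mul_assoc]
      _ = x * (a * (b * y)) := by rw [hfa]
      _ = x * a * (b * y) := by simp only [mul_assoc]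
  -- f g = g f
  have hfg : b * y * (x * x * a) = x * x * a * (b * y) := by
    calc b * y * (x * x * a) = b * y * (x * a * (x * x * a)) := by rw [hpg]
      _ = b * y * (x * a) * (x * x * a) := by simp only [mul_assoc]
      _ = x * a * (b * y) * (x * x * a) := by rw [hfp]
      _ = x * x * a * a * (b * y) * (x * x * a) := by rw [hga]
      _ = x * x * a * (a * (b * y)) * (x * x * a) := by simp only [mul_assoc]
      _ = x * x * a * (b * y * a) * (x * x * a) := by rw [hfa]
      _ = x * x * a * (b * y) * (a * (x * x * a)) := by simp only [mul_assoc]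
      _ = x * x * a * (b * y) * (x * a) := by rw [hag]
      _ = x * x * a * (b * y * (x * a)) := by simp only [mul_assoc]
      _ = x * x * a * (x * a * (b * y)) := by rw [hfp]
      _ = x * x * a * (x * a) * (b * y) := by simp only [mul_assoc]
      _ = x * x * a * (b * y) := by rw [hgp]
  -- x f = f x
  have hxf : x * (b * y) = b * y * x := by
    calc x * (b * y) = x * x * a * (a * x) * (b * y) := by rw [hge]
      _ = x * x * a * (a * x * (b * y)) := by simp only [mul_assoc]
      _ = x * x * a * (b * y * (a * x)) := by rw [d4]
      _ = x * x * a * (b * y) * (a * x) := by simp only [mul_assoc]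
      _ = b * y * (x * x * a) * (a * x) := by rw [hfg]
      _ = b * y * (x * x * a * (a * x)) := by simp only [mul_assoc]
      _ = b * y * x := by rw [hge]
  -- Goal 4: (x*y)*(a*b)^2 = a*b
  have G4 : x * y * (a * b) ^ 2 = a * b := by
    calc x * y * (a * b) ^ 2 = x * y * (a * b * a) * b := by
          rw [pow_two]; simp only [mul_assoc]
      _ = x * y * (b * a * a) * b := by rw [h1]
      _ = x * y * b * (a * a * b) := by simp only [mul_assoc]
      _ = x * y * b * (b * a * a) := by rw [h2]
      _ = x * (y * b * b) * (a * a) := by simp only [mul_assoc]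
      _ = x * b * (a * a) := by rw [hb4]
      _ = x * (b * a * a) := by simp only [mul_assoc]
      _ = x * (a * a * b) := by rw [h2]
      _ = x * a * a * b := by simp only [mul_assoc]
      _ = a * b := by rw [ha4]
  -- Goal 5: (a*b)*(x*y)^2 = x*y
  have G5 : a * b * (x * y) ^ 2 = x * y := by
    calc a * b * (x * y) ^ 2 = a * b * x * (y * x * y) := by
          rw [pow_two]; simp only [mul_assoc]
      _ = a * x * b * (y * x * y) := by rw [h3]
      _ = a * x * (b * y * x) * y := by simp only [mul_assoc]
      _ = a * x * (x * (b * y)) * y := by rw [hxf]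
      _ = a * x * x * (b * y * y) := by simp only [mul_assoc]
      _ = x * (b * y * y) := by rw [ha5]
      _ = x * y := by rw [hb5]
  have hef : a * b * (x * y) = a * x * (b * y) := by
    calc a * b * (x * y) = a * b * x * y := by simp only [mul_assoc]
      _ = a * x * b * y := by rw [h3]
      _ = a * x * (b * y) := by simp only [mul_assoc]
  refine ⟨?_, ?_, ?_, G4, G5⟩
  · -- (a*b)*(x*y)*(a*b) = a*b
    calc a * b * (x * y) * (a * b) = a * x * (b * y) * (a * b) := by rw [hef]
      _ = a * x * (b * y * a) * b := by simp only [mul_assoc]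
      _ = a * x * (a * (b * y)) * b := by rw [hfa]
      _ = a * x * a * (b * y * b) := by simp only [mul_assoc]
      _ = a * (b * y * b) := by rw [ha1]
      _ = a * b := by rw [hb1]
  · -- (x*y)*(a*b)*(x*y) = x*y
    calc x * y * (a * b) * (x * y) = x * y * (a * b) * (a * b * (x * y) ^ 2) := by rw [G5]
      _ = x * y * (a * b) ^ 2 * (x * y) ^ 2 := by
          rw [pow_two, pow_two]; simp only [mul_assoc]
      _ = a * b * (x * y) ^ 2 := by rw [G4]
      _ = x * y := G5
  · -- star
    calc star (a * b * (x * y)) = star (a * x * (b * y)) := by rw [hef]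
      _ = star (b * y) * star (a * x) := star_mul (a * x) (b * y)
      _ = b * y * (a * x) := by rw [ha3, hb3]
      _ = a * x * (b * y) := d4.symm
      _ = a * b * (x * y) := hef.symm
end

section
/- Let a and b be commuting core invertible elements (ab = ba) with core inverses x and y such that ab·x = a·x·b and ab·y = b·y·a. Then x·y is the core inverse of ab. -/
variable {R : Type*} [Ring R] [StarRing R]

theorem stmt7 (a b x y : R) (ha : IsCoreInverse a x) (hb : IsCoreInverse b y)
    (hc : a * b = b * a)
    (h3 : a * b * x = a * x * b) (h4 : a * b * y = b * y * a) :
    IsCoreInverse (a * b) (x * y) := by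
  obtain ⟨ha1, ha2, ha3, ha4, ha5⟩ := ha
  obtain ⟨hb1, hb2, hb3, hb4, hb5⟩ := hb
  rw [pow_two] at ha4 hb4 ha5 hb5
  -- contextual rewrite lemmas
  have Raxa : ∀ t : R, a*(x*(a*t)) = a*t := fun t => by
    simp only [← mul_assoc]; rw [ha1]
  have Raxa' : a*(x*a) = a := by rw [← mul_assoc]; exact ha1
  have Rxax : ∀ t : R, x*(a*(x*t)) = x*t := fun t => by
    simp only [← mul_assoc]; rw [ha2]
  have Rxax' : x*(a*x) = x := by rw [← mul_assoc]; exact ha2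
  have Rxaa : ∀ t : R, x*(a*(a*t)) = a*t := fun t => by
    simp only [← mul_assoc]; rw [mul_assoc x a a, ha4]
  have Rxaa' : x*(a*a) = a := ha4
  have Raxx : ∀ t : R, a*(x*(x*t)) = x*t := fun t => by
    simp only [← mul_assoc]; rw [mul_assoc a x x, ha5]
  have Raxx' : a*(x*x) = x := ha5
  have Rbyb : ∀ t : R, b*(y*(b*t)) = b*t := fun t => by
    simp only [← mul_assoc]; rw [hb1]
  have Rbyb' : b*(y*b) = b := by rw [← mul_assoc]; exact hb1
  have Ryby : ∀ t : R, y*(b*(y*t)) = y*t := fun t => by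
    simp only [← mul_assoc]; rw [hb2]
  have Ryby' : y*(b*y) = y := by rw [← mul_assoc]; exact hb2
  have Rybb : ∀ t : R, y*(b*(b*t)) = b*t := fun t => by
    simp only [← mul_assoc]; rw [mul_assoc y b b, hb4]
  have Rybb' : y*(b*b) = b := hb4
  have Rbyy : ∀ t : R, b*(y*(y*t)) = y*t := fun t => by
    simp only [← mul_assoc]; rw [mul_assoc b y y, hb5]
  have Rbyy' : b*(y*y) = y := hb5
  have Rba : ∀ t : R, b*(a*t) = a*(b*t) := fun t => by
    simp only [← mul_assoc]; rw [← hc]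
  have Rba' : b*a = a*b := hc.symm
  have Rabx : ∀ t : R, a*(b*(x*t)) = a*(x*(b*t)) := fun t => by
    simp only [← mul_assoc]; rw [h3]
  have Rabx' : a*(b*x) = a*(x*b) := by rw [← mul_assoc, ← mul_assoc]; exact h3
  have Raby : ∀ t : R, a*(b*(y*t)) = b*(y*(a*t)) := fun t => by
    simp only [← mul_assoc]; rw [h4]
  have Raby' : a*(b*y) = b*(y*a) := by rw [← mul_assoc, ← mul_assoc]; exact h4
  -- derived commutations
  have Rxb' : x*b = b*x := by
    calc x*b
      _ = x*(a*(x*b)) := by rw [Rxax (b)]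
      _ = x*(a*(b*x)) := by rw [Rabx']
      _ = x*(a*(b*(a*(x*x)))) := by rw [Raxx']
      _ = x*(a*(a*(b*(x*x)))) := by rw [Rba (x*x)]
      _ = a*(b*(x*x)) := by rw [Rxaa (b*(x*x))]
      _ = b*(a*(x*x)) := by rw [Rba (x*x)]
      _ = b*x := by rw [Raxx']
  have Rxb : ∀ t : R, x*(b*t) = b*(x*t) := fun t => by
    rw [← mul_assoc, Rxb', mul_assoc]
  have Rya' : y*a = a*y := by
    calc y*a
      _ = y*(b*(y*a)) := by rw [Ryby (a)]
      _ = y*(a*(b*y)) := by rw [Raby']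
      _ = y*(a*(b*(b*(y*y)))) := by rw [Rbyy']
      _ = y*(b*(a*(b*(y*y)))) := by rw [Rba (b*(y*y))]
      _ = y*(b*(b*(a*(y*y)))) := by rw [Rba (y*y)]
      _ = b*(a*(y*y)) := by rw [Rybb (a*(y*y))]
      _ = a*(b*(y*y)) := by rw [Rba (y*y)]
      _ = a*y := by rw [Rbyy']
  have Rya : ∀ t : R, y*(a*t) = a*(y*t) := fun t => by
    rw [← mul_assoc, Rya', mul_assoc]
  -- the star commutation:  b*y*(a*x) = a*x*(b*y)
  have h5a : a*(x*(b*(y*(a*x)))) = a*(b*(y*x)) := by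
    calc a*(x*(b*(y*(a*x))))
      _ = a*(x*(a*(b*(y*x)))) := by rw [Raby (x)]
      _ = a*(b*(y*x)) := by rw [Raxa (b*(y*x))]
  have h5b : b*(y*(a*x)) = a*(b*(y*x)) := by
    calc b*(y*(a*x))
      _ = a*(b*(y*x)) := by rw [Raby (x)]
  have h5 : a*(x*(b*(y*(a*x)))) = b*(y*(a*x)) := h5a.trans h5b.symm
  have sxa : star x * star a = a * x := by rw [← star_mul, ha3]
  have syb : star y * star b = b * y := by rw [← star_mul, hb3]
  have sxaC : ∀ t : R, star x * (star a * t) = a*(x*t) := fun t => by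
    rw [← mul_assoc, sxa, mul_assoc]
  have sybC : ∀ t : R, star y * (star b * t) = b*(y*t) := fun t => by
    rw [← mul_assoc, syb, mul_assoc]
  have h6 := congrArg star h5
  simp only [star_mul, mul_assoc] at h6
  rw [sxaC, sybC, sxa, sxaC, syb] at h6
  -- now h6 : a*(x*(b*(y*(a*x)))) = a*(x*(b*y))
  have Rbyax' : b*(y*(a*x)) = a*(x*(b*y)) := h5.symm.trans h6
  have Rbyax : ∀ t : R, b*(y*(a*(x*t))) = a*(x*(b*(y*t))) := fun t => by
    simp only [← mul_assoc]
    rw [show b*y*a*x = a*x*(b*y) from by simpa only [mul_assoc] using Rbyax']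
    simp only [mul_assoc]
  refine ⟨?_, ?_, ?_, ?_, ?_⟩
  · show a * b * (x * y) * (a * b) = a * b
    simp only [mul_assoc]
    calc a*(b*(x*(y*(a*b))))
      _ = a*(x*(b*(y*(a*b)))) := by rw [Rabx (y*(a*b))]
      _ = a*(x*(a*(b*(y*b)))) := by rw [Raby (b)]
      _ = a*(b*(y*b)) := by rw [Raxa (b*(y*b))]
      _ = a*b := by rw [Rbyb']
  · show x * y * (a * b) * (x * y) = x * y
    simp only [mul_assoc]
    calc x*(y*(a*(b*(x*y))))
      _ = x*(y*(a*(b*(x*(b*(y*y)))))) := by rw [Rbyy']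
      _ = x*(y*(b*(a*(x*(b*(y*y)))))) := by rw [Rba (x*(b*(y*y)))]
      _ = x*(y*(b*(b*(y*(a*(x*y)))))) := by rw [Rbyax (y)]
      _ = x*(b*(y*(a*(x*y)))) := by rw [Rybb (y*(a*(x*y)))]
      _ = x*(a*(x*(b*(y*y)))) := by rw [Rbyax (y)]
      _ = x*(b*(y*y)) := by rw [Rxax (b*(y*y))]
      _ = x*y := by rw [Rbyy']
  · show star (a * b * (x * y)) = a * b * (x * y)
    have e1 : a*(b*(x*y)) = a*(x*(b*y)) := Rabx y
    have e2 : a * b * (x * y) = a * x * (b * y) := by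
      simpa only [mul_assoc] using e1
    rw [e2, star_mul, hb3, ha3]
    simpa only [mul_assoc] using Rbyax'
  · show x * y * (a * b) ^ 2 = a * b
    simp only [pow_two, mul_assoc]
    calc x*(y*(a*(b*(a*b))))
      _ = x*(y*(a*(a*(b*b)))) := by rw [Rba (b)]
      _ = x*(a*(y*(a*(b*b)))) := by rw [Rya (a*(b*b))]
      _ = x*(a*(a*(y*(b*b)))) := by rw [Rya (b*b)]
      _ = a*(y*(b*b)) := by rw [Rxaa (y*(b*b))]
      _ = a*b := by rw [Rybb']
  · show a * b * (x * y) ^ 2 = x * y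
    simp only [pow_two, mul_assoc]
    calc a*(b*(x*(y*(x*y))))
      _ = a*(b*(x*(y*(x*(b*(y*y)))))) := by rw [Rbyy']
      _ = a*(x*(b*(y*(x*(b*(y*y)))))) := by rw [Rabx (y*(x*(b*(y*y))))]
      _ = a*(x*(b*(y*(b*(x*(y*y)))))) := by rw [Rxb (y*y)]
      _ = a*(x*(b*(x*(y*y)))) := by rw [Rbyb (x*(y*y))]
      _ = a*(x*(x*(b*(y*y)))) := by rw [Rxb (y*y)]
      _ = x*(b*(y*y)) := by rw [Raxx (b*(y*y))]
      _ = x*y := by rw [Rbyy']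
end

section
/- Let a and b be core invertible with core inverses x and y, and suppose ab is core invertible with core inverse z. If a*·b = a*·a·z·b² and y·b·a = a·b·y, then z = x·y. -/
variable {R : Type*} [Ring R] [StarRing R]

theorem stmt8 (a b x y z : R) (ha : IsCoreInverse a x) (hb : IsCoreInverse b y)
    (hab : IsCoreInverse (a * b) z)
    (h1 : star a * b = star a * a * z * b ^ 2) (h2 : y * b * a = a * b * y) :
    z = x * y := by
  obtain ⟨ha1, ha2, ha3, ha4, ha5⟩ := ha
  obtain ⟨hb1, hb2, hb3, hb4, hb5⟩ := hb
  obtain ⟨hc1, hc2, hc3, hc4, hc5⟩ := hab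
  simp only [pow_two] at h1 ha4 ha5 hb4 hb5 hc4 hc5
  -- star facts
  have S1 : star y * star b = b * y := by rw [← star_mul]; exact hb3
  have S2 : star z * star b * star a = a * b * z := by
    have := hc3
    rw [star_mul, star_mul] at this
    calc star z * star b * star a = star z * (star b * star a) := by rw [mul_assoc]
      _ = a * b * z := this
  have S3 : star b * star y * star b = star b := by
    have := congrArg star hb1
    rw [star_mul, star_mul] at this
    calc star b * star y * star b = star b * (star y * star b) := by rw [mul_assoc]
      _ = star b := this
  have S4 : star y * star y * star b = star y := by
    have := congrArg star hb5
    rw [star_mul, star_mul] at this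
    exact this
  have S5 : star a * star b * star y = star y * star b * star a := by
    have := congrArg star h2
    rw [star_mul, star_mul, star_mul, star_mul] at this
    calc star a * star b * star y = star a * (star b * star y) := by rw [mul_assoc]
      _ = star y * (star b * star a) := this
      _ = star y * star b * star a := by rw [mul_assoc]
  -- L1 : x * a * z = z
  have L1 : x * a * z = z := by
    calc x * a * z = x * a * (a * b * (z * z)) := by rw [hc5]
      _ = (x * (a * a)) * (b * (z * z)) := by noncomm_ring
      _ = a * (b * (z * z)) := by rw [ha4]
      _ = a * b * (z * z) := by noncomm_ring
      _ = z := hc5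
  -- A1 : star x * star a = a * x
  have A1 : star x * star a = a * x := by rw [← star_mul]; exact ha3
  -- (A) : a * x * b = a * z * (b*b)
  have hA : a * x * b = a * (z * (b * b)) := by
    have := congrArg (fun t => star x * t) h1
    calc a * x * b = (star x * star a) * b := by rw [A1]
      _ = star x * (star a * b) := by rw [mul_assoc]
      _ = star x * (star a * a * z * (b * b)) := by rw [this]
      _ = (star x * star a) * (a * (z * (b * b))) := by noncomm_ring
      _ = (a * x) * (a * (z * (b * b))) := by rw [A1]
      _ = (a * x * a) * (z * (b * b)) := by noncomm_ring
      _ = a * (z * (b * b)) := by rw [ha1]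
  -- (J) : x * b = z * (b * b)
  have hJ : x * b = z * (b * b) := by
    calc x * b = (x * a * x) * b := by rw [ha2]
      _ = x * (a * x * b) := by noncomm_ring
      _ = x * (a * (z * (b * b))) := by rw [hA]
      _ = (x * a * z) * (b * b) := by noncomm_ring
      _ = z * (b * b) := by rw [L1]
  -- Lemma 5 : star z * star b * star a * star y * star b = star z * star b * star a
  have L5 : star z * star b * star a * (star y * star b) = star z * star b * star a := by
    calc star z * star b * star a * (star y * star b)
        = star z * (star b * star y * star b) * star a * (star y * star b) := by rw [S3]
      _ = star z * star b * (star y * star b * star a) * (star y * star b) := by noncomm_ring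
      _ = star z * star b * (star a * star b * star y) * (star y * star b) := by rw [← S5]
      _ = star z * star b * star a * star b * (star y * star y * star b) := by noncomm_ring
      _ = star z * star b * star a * star b * star y := by rw [S4]
      _ = star z * star b * (star a * star b * star y) := by noncomm_ring
      _ = star z * star b * (star y * star b * star a) := by rw [S5]
      _ = star z * (star b * star y * star b) * star a := by noncomm_ring
      _ = star z * star b * star a := by rw [S3]
  -- zby = z
  have key : z * b * y = z := by
    calc z * b * y = (z * (a * b) * z) * b * y := by rw [hc2]
      _ = z * (a * b * z) * (b * y) := by noncomm_ring
      _ = z * (a * b * z) * (star y * star b) := by rw [S1]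
      _ = z * (star z * star b * star a) * (star y * star b) := by rw [S2]
      _ = z * (star z * star b * star a * (star y * star b)) := by noncomm_ring
      _ = z * (star z * star b * star a) := by rw [L5]
      _ = z * (a * b * z) := by rw [S2]
      _ = z * (a * b) * z := by noncomm_ring
      _ = z := hc2
  -- conclude
  have xy_eq : x * y = z * b * y := by
    calc x * y = x * (b * (y * y)) := by rw [hb5]
      _ = (x * b) * (y * y) := by noncomm_ring
      _ = (z * (b * b)) * (y * y) := by rw [hJ]
      _ = (z * b) * (b * (y * y)) := by noncomm_ring
      _ = z * b * y := by rw [hb5]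
  calc z = z * b * y := key.symm
    _ = x * y := xy_eq.symm
end

section
/- Let a and b be core invertible with core inverses x and y, satisfying b·y·a = a·b·y. If ab is core invertible with core inverse x·y, then ab is group invertible, a·y ∈ x·y·R, and a*·y·(1 − (ab·x·y)*)·b = 0. -/
variable {R : Type*} [Ring R] [StarRing R]

theorem stmt9 (a b x y : R) (ha : IsCoreInverse a x) (hb : IsCoreInverse b y)
    (hc : b * y * a = a * b * y) (hab : IsCoreInverse (a * b) (x * y)) :
    (∃ g : R, a * b * g * (a * b) = a * b ∧ g * (a * b) * g = g ∧ a * b * g = g * (a * b)) ∧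
    (∃ r : R, a * y = x * y * r) ∧
    star a * y * (1 - star (a * b * (x * y))) * b = 0 := by
  obtain ⟨ha1, ha2, ha3, ha4, ha5⟩ := ha
  obtain ⟨hb1, hb2, hb3, hb4, hb5⟩ := hb
  obtain ⟨hab1, hab2, hab3, hab4, hab5⟩ := hab
  simp only [pow_two, ← mul_assoc] at hab1 hab2 hab4 hab5 hb5
  -- now: hab1 : a*b*x*y*a*b = a*b, hab2 : x*y*a*b*x*y = x*y,
  -- hab4 : x*y*a*b*a*b = a*b, hab5 : a*b*x*y*x*y = x*y, hb5 : b*y*y = y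
  refine ⟨⟨x*y*x*y*a*b, ?_, ?_, ?_⟩, ⟨a*b*a*b*y*y, ?_⟩, ?_⟩
  · -- a*b*(x*y*x*y*a*b)*(a*b) = a*b
    calc a*b*(x*y*x*y*a*b)*(a*b) = a*b*x*y*x*y*(a*b*a*b) := by
          simp only [mul_assoc]
      _ = x*y*(a*b*a*b) := by rw [hab5]
      _ = x*y*a*b*a*b := by simp only [mul_assoc]
      _ = a*b := hab4
  · -- (x*y*x*y*a*b)*(a*b)*(x*y*x*y*a*b) = x*y*x*y*a*b
    calc x*y*x*y*a*b*(a*b)*(x*y*x*y*a*b)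
        = x*y*x*y*a*b*(a*b*x*y*x*y*a*b) := by simp only [mul_assoc]
      _ = x*y*x*y*a*b*(x*y*a*b) := by
          have h : a*b*x*y*x*y*a*b = x*y*a*b := by rw [hab5]
          rw [h]
      _ = x*y*x*y*(a*b*x*y*a*b) := by simp only [mul_assoc]
      _ = x*y*x*y*(a*b) := by rw [hab1]
      _ = x*y*x*y*a*b := by simp only [mul_assoc]
  · -- a*b*(x*y*x*y*a*b) = (x*y*x*y*a*b)*(a*b)
    calc a*b*(x*y*x*y*a*b) = a*b*x*y*x*y*(a*b) := by simp only [mul_assoc]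
      _ = x*y*(a*b) := by rw [hab5]
      _ = x*y*(x*y*a*b*a*b) := by rw [hab4]
      _ = x*y*x*y*a*b*(a*b) := by simp only [mul_assoc]
  · -- a*y = x*y*(a*b*a*b*y*y)
    symm
    calc x*y*(a*b*a*b*y*y) = x*y*a*b*a*b*(y*y) := by simp only [mul_assoc]
      _ = a*b*(y*y) := by rw [hab4]
      _ = a*(b*y*y) := by simp only [mul_assoc]
      _ = a*y := by rw [hb5]
  · rw [hab3]
    have hA : star a = star a * (a*x) := by
      conv_lhs => rw [← ha1]
      rw [star_mul, ha3]
    have key : x*y*(1 - a*b*(x*y)) = 0 := by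
      rw [mul_sub, mul_one]
      have h2 : x*y*(a*b*(x*y)) = x*y*a*b*x*y := by simp only [mul_assoc]
      rw [h2, hab2, sub_self]
    rw [hA]
    calc star a * (a*x) * y * (1 - a*b*(x*y)) * b
        = star a * a * (x*y*(1 - a*b*(x*y))) * b := by simp only [mul_assoc]
      _ = 0 := by rw [key]; simp
end

section
/- Let a and b be core invertible with core inverses x and y, satisfying b·y·a = a·b·y. If ab is group invertible, a·y ∈ x·y·R, and a*·y·(1 − (ab·x·y)*)·b = 0, then ab is core invertible with core inverse x·y. -/
variable {R : Type*} [Ring R] [StarRing R]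

theorem stmt10 (a b x y : R) (ha : IsCoreInverse a x) (hb : IsCoreInverse b y)
    (hc : b * y * a = a * b * y)
    (hg : ∃ g : R, a * b * g * (a * b) = a * b ∧ g * (a * b) * g = g ∧ a * b * g = g * (a * b))
    (hr : ∃ r : R, a * y = x * y * r)
    (h0 : star a * y * (1 - star (a * b * (x * y))) * b = 0) :
    IsCoreInverse (a * b) (x * y) := by
  obtain ⟨ha1, ha2, ha3, ha4, ha5⟩ := ha
  obtain ⟨hb1, hb2, hb3, hb4, hb5⟩ := hb
  obtain ⟨g, hg1, hg2, hg3⟩ := hg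
  obtain ⟨r, hr⟩ := hr
  have hxa : star x * star a = a * x := by rw [← star_mul]; exact ha3
  have g4 : y * (b * b) = b := by rw [← pow_two]; exact hb4
  -- f F = F where f = b*y, F = a*b*(x*y)
  have hfF : b * y * (a * b * (x * y)) = a * b * (x * y) := by
    calc b * y * (a * b * (x * y)) = (b * y * a) * (b * (x * y)) := by noncomm_ring
      _ = (a * b * y) * (b * (x * y)) := by rw [hc]
      _ = a * (b * y * b) * (x * y) := by noncomm_ring
      _ = a * b * (x * y) := by rw [hb1]
  have hFsf : star (a * b * (x * y)) * (b * y) = star (a * b * (x * y)) := by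
    have h := congrArg star hfF
    rw [star_mul, hb3] at h
    exact h
  have h0' : star a * y * b = star a * y * star (a * b * (x * y)) * b := by
    have e : star a * y * (1 - star (a * b * (x * y))) * b
        = star a * y * b - star a * y * star (a * b * (x * y)) * b := by noncomm_ring
    rw [e] at h0
    exact sub_eq_zero.mp h0
  have s3pre : star a * y * (b * y) = star a * y * star (a * b * (x * y)) := by
    calc star a * y * (b * y) = star a * y * b * y := by noncomm_ring
      _ = star a * y * star (a * b * (x * y)) * b * y := by rw [h0']
      _ = star a * y * (star (a * b * (x * y)) * (b * y)) := by noncomm_ring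
      _ = star a * y * star (a * b * (x * y)) := by rw [hFsf]
  have s3 : a * (x * y) = a * (x * y) * star (a * b * (x * y)) := by
    calc a * (x * y) = (a * x) * (y * b * y) := by rw [hb2]; noncomm_ring
      _ = star x * star a * (y * (b * y)) := by rw [hxa]; noncomm_ring
      _ = star x * (star a * y * (b * y)) := by noncomm_ring
      _ = star x * (star a * y * star (a * b * (x * y))) := by rw [s3pre]
      _ = (star x * star a) * (y * star (a * b * (x * y))) := by noncomm_ring
      _ = (a * x) * (y * star (a * b * (x * y))) := by rw [hxa]
      _ = a * (x * y) * star (a * b * (x * y)) := by noncomm_ring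
  have s4 : x * y = x * y * star (a * b * (x * y)) := by
    calc x * y = x * a * x * y := by rw [ha2]
      _ = x * (a * (x * y)) := by noncomm_ring
      _ = x * (a * (x * y) * star (a * b * (x * y))) := by conv_lhs => rw [s3]
      _ = (x * a * x) * y * star (a * b * (x * y)) := by noncomm_ring
      _ = x * y * star (a * b * (x * y)) := by rw [ha2]
  have s5 : a * b * (x * y) * star (a * b * (x * y)) = a * b * (x * y) := by
    calc a * b * (x * y) * star (a * b * (x * y))
        = a * b * (x * y * star (a * b * (x * y))) := by noncomm_ring
      _ = a * b * (x * y) := by rw [← s4]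
  have p2 : star (a * b * (x * y)) = a * b * (x * y) := by
    conv_lhs => rw [← s5]
    rw [star_mul, star_star, s5]
  have s6 : x * y * (a * b * (x * y)) = x * y := by
    rw [← p2]; exact s4.symm
  have cond2 : x * y * (a * b) * (x * y) = x * y := by
    calc x * y * (a * b) * (x * y) = x * y * (a * b * (x * y)) := by noncomm_ring
      _ = x * y := s6
  have u1 : x * y * (a * b) * (a * y) = a * y := by
    calc x * y * (a * b) * (a * y) = x * y * (a * b) * (x * y * r) := by rw [hr]
      _ = (x * y * (a * b) * (x * y)) * r := by noncomm_ring
      _ = x * y * r := by rw [cond2]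
      _ = a * y := hr.symm
  have cond4' : x * y * (a * b) * (a * b) = a * b := by
    calc x * y * (a * b) * (a * b) = x * y * (a * b) * (a * (y * (b * b))) := by rw [g4]
      _ = (x * y * (a * b) * (a * y)) * (b * b) := by noncomm_ring
      _ = a * y * (b * b) := by rw [u1]
      _ = a * (y * (b * b)) := by noncomm_ring
      _ = a * b := by rw [g4]
  have ppg : a * b * (a * b * g) = a * b := by
    calc a * b * (a * b * g) = a * b * (g * (a * b)) := by rw [hg3]
      _ = a * b * g * (a * b) := by noncomm_ring
      _ = a * b := hg1
  have tp : x * y * (a * b) = a * b * g := by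
    calc x * y * (a * b) = x * y * (a * b * (a * b * g)) := by rw [ppg]
      _ = (x * y * (a * b) * (a * b)) * g := by noncomm_ring
      _ = a * b * g := by rw [cond4']
  have cond1 : a * b * (x * y) * (a * b) = a * b := by
    calc a * b * (x * y) * (a * b) = a * b * (x * y * (a * b)) := by noncomm_ring
      _ = a * b * (a * b * g) := by rw [tp]
      _ = a * b := ppg
  have tgF : x * y = g * (a * b * (x * y)) := by
    calc x * y = x * y * (a * b * (x * y)) := s6.symm
      _ = (x * y * (a * b)) * (x * y) := by noncomm_ring
      _ = (a * b * g) * (x * y) := by rw [tp]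
      _ = (g * (a * b)) * (x * y) := by rw [hg3]
      _ = g * (a * b * (x * y)) := by noncomm_ring
  have gpg2 : a * b * (g * g) = g := by
    calc a * b * (g * g) = (a * b * g) * g := by noncomm_ring
      _ = (g * (a * b)) * g := by rw [hg3]
      _ = g := hg2
  have Fg : a * b * (x * y) * g = g := by
    calc a * b * (x * y) * g = a * b * (x * y) * (a * b * (g * g)) := by rw [gpg2]
      _ = (a * b * (x * y) * (a * b)) * (g * g) := by noncomm_ring
      _ = a * b * (g * g) := by rw [cond1]
      _ = g := gpg2
  have cond5' : a * b * ((x * y) * (x * y)) = x * y := by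
    calc a * b * ((x * y) * (x * y)) = a * b * (x * y) * (x * y) := by noncomm_ring
      _ = a * b * (x * y) * (g * (a * b * (x * y))) := by rw [← tgF]
      _ = (a * b * (x * y) * g) * (a * b * (x * y)) := by noncomm_ring
      _ = g * (a * b * (x * y)) := by rw [Fg]
      _ = x * y := tgF.symm
  refine ⟨cond1, cond2, p2, ?_, ?_⟩
  · rw [pow_two, ← mul_assoc]; exact cond4'
  · rw [pow_two]; exact cond5'
end

section
/- Let a and b be core invertible with core inverses x and y. If ab = ba and ab* = b*a, then x·y is the core inverse of ab and x·y = y·x. -/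
variable {R : Type*} [Ring R] [StarRing R]

private lemma swap' {S : Type*} [Ring S] {u v : S} (h : u * v = v * u) (t : S) :
    u * (v * t) = v * (u * t) := by rw [← mul_assoc, h, mul_assoc]

private lemma midr {S : Type*} [Ring S] {u v w r : S} (h : u * (v * w) = r) (t : S) :
    u * (v * (w * t)) = r * t := by
  rw [← mul_assoc, ← mul_assoc, mul_assoc u v w, h]

/-- the group inverse commutes with anything commuting with `a` -/
private lemma gcomm {S : Type*} [Ring S] {a g c : S} (hag : a * g = g * a)
    (hgag : g * (a * g) = g) (haga : a * (g * a) = a) (hc : c * a = a * c) :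
    g * c = c * g := by
  have hca : c * a = a * c := hc
  have hac : a * c = c * a := hc.symm
  have hgga : g * (g * a) = g := by rw [← hag, hgag]
  have haag : a * (a * g) = a := by rw [hag, haga]
  -- e := a * g ; first show e * c = c * e
  have key1 : (a * g) * (c * (a * g)) = c * (a * g) := by
    calc (a * g) * (c * (a * g)) = (a * g) * (a * (c * g)) := by rw [swap' hca]
      _ = a * (g * (a * (c * g))) := by rw [mul_assoc]
      _ = a * (c * g) := midr haga _
      _ = c * (a * g) := swap' hac _
  have key2 : ((a * g) * c) * (a * g) = (a * g) * c := by
    calc ((a * g) * c) * (a * g) = ((g * a) * c) * (a * g) := by rw [hag]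
      _ = (g * (c * a)) * (a * g) := by rw [mul_assoc g a c, hac]
      _ = (g * c) * (a * (a * g)) := by rw [← mul_assoc g c a, mul_assoc (g*c) a (a*g)]
      _ = (g * c) * a := by rw [haag]
      _ = g * (a * c) := by rw [mul_assoc, hc]
      _ = (g * a) * c := by rw [mul_assoc]
      _ = (a * g) * c := by rw [hag]
  have hec : (a * g) * c = c * (a * g) := by
    rw [← key2, mul_assoc, key1]
  calc g * c = (g * (g * a)) * c := by rw [hgga]
    _ = g * (g * (a * c)) := by rw [mul_assoc, mul_assoc]
    _ = g * (g * (c * a)) := by rw [hc]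
    _ = g * (g * (c * (a * (a * g)))) := by rw [haag]
    _ = g * (g * (a * (c * (a * g)))) := by rw [swap' hca]
    _ = g * (g * (a * (a * (c * g)))) := by rw [swap' hca]
    _ = (g * (g * a)) * (a * (c * g)) := by simp only [mul_assoc]
    _ = g * (a * (c * g)) := by rw [hgga]
    _ = (a * g) * (c * g) := by rw [← mul_assoc, hag]
    _ = (c * (a * g)) * g := by rw [← mul_assoc, hec]
    _ = c * g := by
        have hagg : a * (g * g) = g := by rw [← mul_assoc, hag, mul_assoc, hgag]
        rw [mul_assoc, mul_assoc, hagg]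

/-- a hermitian projection-like element `p = a*s` with `p*a = a` commutes with anything
    `c` such that `c` and `star c` commute with `a` -/
private lemma pcomm {S : Type*} [Ring S] [StarRing S] {a p c s : S} (hp : star p = p)
    (hpa : p * a = a) (hs : p = a * s) (hc : c * a = a * c)
    (hcs : star c * a = a * star c) : p * c = c * p := by
  have pcp : ∀ d : S, d * a = a * d → p * (d * p) = d * p := by
    intro d hd
    calc p * (d * p) = p * (d * (a * s)) := by rw [← hs]
      _ = p * (a * (d * s)) := by rw [swap' hd]
      _ = (p * a) * (d * s) := by rw [mul_assoc]
      _ = a * (d * s) := by rw [hpa]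
      _ = d * (a * s) := swap' hd.symm _
      _ = d * p := by rw [← hs]
  have h3 : p * (c * p) = c * p := pcp c hc
  have h4 : p * (star c * p) = star c * p := pcp (star c) hcs
  have h5 : p * (star c * p) = p * star c := by
    have := congrArg star h3
    simpa [star_mul, hp, mul_assoc] using this
  have h6 : star c * p = p * star c := h4.symm.trans h5
  have := congrArg star h6
  simpa [star_mul, hp] using this

private lemma core_comm {S : Type*} [Ring S] [StarRing S] {a x c : S}
    (ha1 : a * x * a = a) (ha2 : x * a * x = x) (ha3 : star (a * x) = a * x)
    (ha4 : x * a ^ 2 = a) (ha5 : a * x ^ 2 = x)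
    (hc : c * a = a * c) (hcs : star c * a = a * star c) : x * c = c * x := by
  have ha1' : a * (x * a) = a := by rw [← mul_assoc]; exact ha1
  have ha2' : x * (a * x) = x := by rw [← mul_assoc]; exact ha2
  have ha4' : x * (a * a) = a := by rw [sq] at ha4; exact ha4
  have ha5' : a * (x * x) = x := by rw [sq] at ha5; exact ha5
  have e1 : a * (x * (x * a)) = x * a := midr ha5' a
  have e2 : (x * (x * a)) * a = x * a := by rw [mul_assoc, mul_assoc, ha4']
  have hag : a * (x * (x * a)) = (x * (x * a)) * a := by rw [e1, e2]
  have hgag : (x * (x * a)) * (a * (x * (x * a))) = x * (x * a) := by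
    rw [e1, mul_assoc, mul_assoc x a (x*a), ha1']
  have haga : a * ((x * (x * a)) * a) = a := by rw [e2, ha1']
  have hgc : (x * (x * a)) * c = c * (x * (x * a)) := gcomm hag hgag haga hc
  have hpc : (a * x) * c = c * (a * x) := pcomm ha3 ha1 rfl hc hcs
  have hgp : (x * (x * a)) * (a * x) = x := by
    rw [mul_assoc, mul_assoc x a (a*x), midr ha4' x, ha2']
  calc x * c = ((x * (x * a)) * (a * x)) * c := by rw [hgp]
    _ = (x * (x * a)) * ((a * x) * c) := by rw [mul_assoc]
    _ = (x * (x * a)) * (c * (a * x)) := by rw [hpc]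
    _ = ((x * (x * a)) * c) * (a * x) := (mul_assoc _ _ _).symm
    _ = (c * (x * (x * a))) * (a * x) := by rw [hgc]
    _ = c * ((x * (x * a)) * (a * x)) := by rw [mul_assoc]
    _ = c * x := by rw [hgp]

theorem stmt11 (a b x y : R) (ha : IsCoreInverse a x) (hb : IsCoreInverse b y)
    (h1 : a * b = b * a) (h2 : a * star b = star b * a) :
    IsCoreInverse (a * b) (x * y) ∧ x * y = y * x := by
  obtain ⟨ha1, ha2, ha3, ha4, ha5⟩ := ha
  obtain ⟨hb1, hb2, hb3, hb4, hb5⟩ := hb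
  -- derived commutation relations
  have h2s : b * star a = star a * b := by
    have := congrArg star h2
    simpa [star_mul] using this
  have hxb : x * b = b * x := core_comm ha1 ha2 ha3 ha4 ha5 h1.symm h2.symm
  have hxbs : x * star b = star b * x := by
    refine core_comm ha1 ha2 ha3 ha4 ha5 h2.symm ?_
    simpa using h1.symm
  have hya : y * a = a * y := core_comm hb1 hb2 hb3 hb4 hb5 h1 h2s.symm
  have hyx : y * x = x * y := by
    refine core_comm hb1 hb2 hb3 hb4 hb5 hxb ?_
    have := congrArg star hxbs
    simpa [star_mul] using this.symm
  -- right-assoc forms of the hypotheses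
  have ha1' : a * (x * a) = a := by rw [← mul_assoc]; exact ha1
  have ha2' : x * (a * x) = x := by rw [← mul_assoc]; exact ha2
  have ha4' : x * (a * a) = a := by rw [sq] at ha4; exact ha4
  have ha5' : a * (x * x) = x := by rw [sq] at ha5; exact ha5
  have hb1' : b * (y * b) = b := by rw [← mul_assoc]; exact hb1
  have hb2' : y * (b * y) = y := by rw [← mul_assoc]; exact hb2
  have hb4' : y * (b * b) = b := by rw [sq] at hb4; exact hb4
  have hb5' : b * (y * y) = y := by rw [sq] at hb5; exact hb5
  have hbx : b * x = x * b := hxb.symm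
  have hba : b * a = a * b := h1.symm
  have hay : a * y = y * a := hya.symm
  refine ⟨⟨?_, ?_, ?_, ?_, ?_⟩, hyx.symm⟩
  · -- (a*b) * (x*y) * (a*b) = a*b
    calc a * b * (x * y) * (a * b)
        = a * (b * (x * (y * (a * b)))) := by simp only [mul_assoc]
      _ = a * (b * (x * (a * (y * b)))) := by rw [swap' hya]
      _ = a * (x * (b * (a * (y * b)))) := by rw [swap' hbx]
      _ = a * (x * (a * (b * (y * b)))) := by rw [swap' hba]
      _ = a * (x * (a * b)) := by rw [hb1']
      _ = a * b := midr ha1' b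
  · -- (x*y) * (a*b) * (x*y) = x*y
    calc x * y * (a * b) * (x * y)
        = x * (y * (a * (b * (x * y)))) := by simp only [mul_assoc]
      _ = x * (y * (a * (x * (b * y)))) := by rw [swap' hbx]
      _ = x * (a * (y * (x * (b * y)))) := by rw [swap' hya]
      _ = x * (a * (x * (y * (b * y)))) := by rw [swap' hyx]
      _ = x * (a * (x * y)) := by rw [hb2']
      _ = x * y := midr ha2' y
  · -- star
    have key : a * b * (x * y) = (a * x) * (b * y) := by
      calc a * b * (x * y) = a * (b * (x * y)) := by rw [mul_assoc]
        _ = a * (x * (b * y)) := by rw [swap' hbx]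
        _ = (a * x) * (b * y) := by rw [mul_assoc]
    rw [key, star_mul, ha3, hb3]
    calc (b * y) * (a * x) = b * (y * (a * x)) := by rw [mul_assoc]
      _ = b * (a * (y * x)) := by rw [swap' hya]
      _ = a * (b * (y * x)) := by rw [swap' hba]
      _ = a * (b * (x * y)) := by rw [hyx]
      _ = a * (x * (b * y)) := by rw [swap' hbx]
      _ = (a * x) * (b * y) := by rw [mul_assoc]
  · -- (x*y) * (a*b)^2 = a*b
    calc x * y * (a * b) ^ 2
        = x * (y * (a * (b * (a * b)))) := by rw [sq]; simp only [mul_assoc]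
      _ = x * (y * (a * (a * (b * b)))) := by rw [swap' hba]
      _ = x * (a * (y * (a * (b * b)))) := by rw [swap' hya]
      _ = x * (a * (a * (y * (b * b)))) := by rw [swap' hya]
      _ = x * (a * (a * b)) := by rw [hb4']
      _ = a * b := midr ha4' b
  · -- (a*b) * (x*y)^2 = x*y
    calc a * b * (x * y) ^ 2
        = a * (b * (x * (y * (x * y)))) := by rw [sq]; simp only [mul_assoc]
      _ = a * (b * (x * (x * (y * y)))) := by rw [swap' hyx]
      _ = a * (x * (b * (x * (y * y)))) := by rw [swap' hbx]
      _ = a * (x * (x * (b * (y * y)))) := by rw [swap' hbx]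
      _ = a * (x * (x * y)) := by rw [hb5']
      _ = x * y := midr ha5' y
end

section
/- Let a and b be core invertible with core inverses x and y, satisfying a*·y = y·a*, bab = ab², a·y = y·a, and x·b = b·x. Then x·y is the core inverse of ab and x·y = y·x. -/
variable {R : Type*} [Ring R] [StarRing R]

theorem stmt12 (a b x y : R) (ha : IsCoreInverse a x) (hb : IsCoreInverse b y)
    (h1 : star a * y = y * star a) (h2 : b * a * b = a * b ^ 2)
    (h3 : a * y = y * a) (h4 : x * b = b * x) :
    IsCoreInverse (a * b) (x * y) ∧ x * y = y * x := by
  obtain ⟨ha1, ha2, ha3, ha4, ha5⟩ := ha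
  obtain ⟨hb1, hb2, hb3, hb4, hb5⟩ := hb
  rw [pow_two] at ha4 ha5 hb4 hb5 h2
  -- bare right-associated forms
  have la4 : x * a * a = a := by rw [mul_assoc]; exact ha4
  have la5 : a * x * x = x := by rw [mul_assoc]; exact ha5
  have lb4 : y * b * b = b := by rw [mul_assoc]; exact hb4
  have lb5 : b * y * y = y := by rw [mul_assoc]; exact hb5
  have ra2 : x * (a * x) = x := by rw [← mul_assoc]; exact ha2
  have rb1 : b * (y * b) = b := by rw [← mul_assoc]; exact hb1
  have rb2 : y * (b * y) = y := by rw [← mul_assoc]; exact hb2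
  have rh2 : b * (a * b) = a * (b * b) := by rw [← mul_assoc]; exact h2
  -- operator (tail) forms
  have A1 : ∀ t : R, a * (x * (a * t)) = a * t := fun t => by
    rw [← mul_assoc, ← mul_assoc, ha1]
  have A2 : ∀ t : R, x * (a * (x * t)) = x * t := fun t => by
    rw [← mul_assoc, ← mul_assoc, ha2]
  have A4 : ∀ t : R, x * (a * (a * t)) = a * t := fun t => by
    rw [← mul_assoc, ← mul_assoc, la4]
  have A5 : ∀ t : R, a * (x * (x * t)) = x * t := fun t => by
    rw [← mul_assoc, ← mul_assoc, la5]
  have B5 : ∀ t : R, b * (y * (y * t)) = y * t := fun t => by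
    rw [← mul_assoc, ← mul_assoc, lb5]
  have H2op : ∀ t : R, b * (a * (b * t)) = a * (b * (b * t)) := fun t => by
    rw [← mul_assoc, ← mul_assoc, h2, mul_assoc, mul_assoc]
  have H3op : ∀ t : R, a * (y * t) = y * (a * t) := fun t => by
    rw [← mul_assoc, h3, mul_assoc]
  have H4op : ∀ t : R, x * (b * t) = b * (x * t) := fun t => by
    rw [← mul_assoc, h4, mul_assoc]
  have hys : star y * a = a * star y := by
    have := congrArg star h1
    simp only [star_mul, star_star] at this
    exact this
  have HYSop : ∀ t : R, star y * (a * t) = a * (star y * t) := fun t => by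
    rw [← mul_assoc, hys, mul_assoc]
  -- b a y = a b y (with tail)
  have BAYop : ∀ t : R, b * (a * (y * t)) = a * (b * (y * t)) := fun t => by
    rw [← B5 t, H2op]
  -- group-inverse commutation machinery
  have LAAG : ∀ s : R, a * (a * (x * (x * (a * s)))) = a * s := fun s => by
    rw [A5, A1]
  have LG2A : ∀ s : R, x * (x * (a * (x * (x * (a * (a * s)))))) = x * (x * (a * s)) :=
    fun s => by rw [A4, A1]
  have LGGAA : ∀ s : R, x * (x * (a * (x * (x * (a * (a * (a * s))))))) = x * (a * s) :=
    fun s => by rw [A4, A1, A4]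
  have GYE : ∀ t : R, x * (x * (a * (y * t))) = x * (a * (y * (x * (x * (a * t))))) := by
    intro t
    conv_lhs => rw [← LG2A (y * t), H3op, ← LAAG t, ← H3op, ← H3op, LGGAA]
  have EY : ∀ t : R, x * (a * (y * t)) = y * (x * (a * t)) := fun t => by
    rw [← A5 (a * (y * t)), GYE, A1, H3op, A5]
  have GY : ∀ t : R, x * (x * (a * (y * t))) = y * (x * (x * (a * t))) := fun t => by
    rw [GYE t, EY (x * (x * (a * t))), A2]
  -- p y = y p where p = a x
  have q1 : a * (x * (star y * (a * x))) = star y * (a * x) := by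
    rw [HYSop, A1]
  have q2 : (a * x) * (y * (a * x)) = (a * x) * y := by
    have h5 : star ((a * x) * (y * (a * x))) = (a * x) * (star y * (a * x)) := by
      rw [star_mul, star_mul, ha3, mul_assoc]
    have h6 : (a * x) * (star y * (a * x)) = star y * (a * x) := by
      rw [mul_assoc]; exact q1
    calc (a * x) * (y * (a * x)) = star (star ((a * x) * (y * (a * x)))) :=
          (star_star _).symm
      _ = star (star y * (a * x)) := by rw [h5, h6]
      _ = (a * x) * y := by rw [star_mul, ha3, star_star]
  have pyp_eq : a * (x * (y * (a * x))) = y * (a * x) := by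
    rw [← H3op, A1]
  have q4' : (a * x) * (y * (a * x)) = y * (a * x) := by
    rw [mul_assoc]; exact pyp_eq
  have q5 : (a * x) * y = y * (a * x) := q2.symm.trans q4'
  have q5' : a * (x * y) = y * (a * x) := by rw [← mul_assoc]; exact q5
  -- the commutation x y = y x
  have hcomm : x * y = y * x := by
    calc x * y = x * (x * (a * (a * (x * y)))) :=
          (show x * (x * (a * (a * (x * y)))) = x * y by rw [A4, A2]).symm
      _ = x * (x * (a * (y * (a * x)))) := by rw [q5']
      _ = y * (x * (x * (a * (a * x)))) := GY (a * x)
      _ = y * x := by rw [A4, ra2]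
  have HC : ∀ t : R, x * (y * t) = y * (x * t) := fun t => by
    rw [← mul_assoc, hcomm, mul_assoc]
  refine ⟨⟨?_, ?_, ?_, ?_, ?_⟩, hcomm⟩
  · -- (ab)(xy)(ab) = ab
    simp only [mul_assoc]
    rw [← H4op, ← H3op, BAYop, A1, rb1]
  · -- (xy)(ab)(xy) = xy
    simp only [mul_assoc]
    rw [← H3op, ← H4op, ← HC, A2, rb2]
  · -- star((ab)(xy)) = (ab)(xy)
    have e1 : (a * b) * (x * y) = (a * x) * (b * y) := by
      rw [mul_assoc, ← H4op, ← mul_assoc]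
    rw [e1, star_mul, hb3, ha3]
    simp only [mul_assoc]
    rw [← H3op, BAYop, ← hcomm, H4op]
  · -- (xy)(ab)^2 = ab
    rw [pow_two]
    simp only [mul_assoc]
    rw [← H3op, rh2, ← H3op, A4, hb4]
  · -- (ab)(xy)^2 = xy
    rw [pow_two]
    simp only [mul_assoc]
    rw [← HC, ← H4op, ← H4op, A5, hb5]
end

section
/- Let a, b, and ab be core invertible with core inverses x, y, z respectively. Then z = x·y if and only if a*·a·z = a*·y. -/
variable {R : Type*} [Ring R] [StarRing R]

theorem stmt13 (a b x y z : R) (ha : IsCoreInverse a x) (hb : IsCoreInverse b y)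
    (hab : IsCoreInverse (a * b) z) :
    z = x * y ↔ star a * a * z = star a * y := by
  obtain ⟨ha1, ha2, ha3, ha4, ha5⟩ := ha
  obtain ⟨hab1, hab2, hab3, hab4, hab5⟩ := hab
  have key : star a * (a * x) = star a := by
    rw [← ha3, ← star_mul, ha1]
  constructor
  · intro h
    rw [h, ← mul_assoc, mul_assoc (star a) a x, key]
  · intro h
    have h1 : a * z = a * x * y := by
      calc a * z = (a * x * a) * z := by rw [ha1]
        _ = (a * x) * (a * z) := by noncomm_ring
        _ = (star x * star a) * (a * z) := by rw [← star_mul, ha3]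
        _ = star x * (star a * a * z) := by noncomm_ring
        _ = star x * (star a * y) := by rw [h]
        _ = (star x * star a) * y := by rw [mul_assoc]
        _ = a * x * y := by rw [← star_mul, ha3]
    have h2 : x * (a * z) = z := by
      calc x * (a * z) = x * (a * (a * b * z ^ 2)) := by rw [hab5]
        _ = (x * a ^ 2) * (b * z ^ 2) := by noncomm_ring
        _ = a * (b * z ^ 2) := by rw [ha4]
        _ = a * b * z ^ 2 := by rw [mul_assoc]
        _ = z := hab5
    calc z = x * (a * z) := h2.symm
      _ = x * (a * x * y) := by rw [h1]
      _ = (x * a * x) * y := by noncomm_ring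
      _ = x * y := by rw [ha2]
end

section
/- Let e be an invertible Hermitian element and let a, b be e-weighted core invertible with e-weighted core inverses x and y. If ab = b², then ab is e-weighted core invertible and its e-weighted core inverse is x·y. -/
variable {R : Type*} [Ring R] [StarRing R]

def IsWeightedCoreInverse (e a x : R) : Prop :=
  a * x ^ 2 = x ∧ x * a ^ 2 = a ∧ star (e * a * x) = e * a * x

theorem stmt14 (e a b x y : R) (he : IsUnit e) (hes : star e = e)
    (ha : IsWeightedCoreInverse e a x) (hb : IsWeightedCoreInverse e b y)
    (hab : a * b = b ^ 2) :
    IsWeightedCoreInverse e (a * b) (x * y) := by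
  obtain ⟨hax, hxa, hsx⟩ := ha
  obtain ⟨hby, hyb, hsy⟩ := hb
  simp only [pow_two] at hax hxa hby hyb hab
  -- b * (y*y) = y, y * (b*b) = b, a * b = b * b
  have hbyb : b * y * b = b := by
    calc b * y * b = b * y * (y * (b * b)) := by rw [hyb]
      _ = b * (y * y) * (b * b) := by noncomm_ring
      _ = y * (b * b) := by rw [hby]
      _ = b := hyb
  have hay : a * y = b * y := by
    calc a * y = a * (b * (y * y)) := by rw [hby]
      _ = a * b * (y * y) := by noncomm_ring
      _ = b * b * (y * y) := by rw [hab]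
      _ = b * (b * (y * y)) := by noncomm_ring
      _ = b * y := by rw [hby]
  have hayb : a * (y * b) = b := by
    calc a * (y * b) = a * y * b := by noncomm_ring
      _ = b * y * b := by rw [hay]
      _ = b := hbyb
  have hxab : x * (a * b) = b := by
    calc x * (a * b) = x * (a * (a * (y * b))) := by rw [hayb]
      _ = x * (a * a) * (y * b) := by noncomm_ring
      _ = a * (y * b) := by rw [hxa]
      _ = b := hayb
  have hxby : x * (b * y) = y := by
    calc x * (b * y) = x * (b * (b * (y * y))) := by rw [hby]
      _ = x * (b * b) * (y * y) := by noncomm_ring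
      _ = x * (a * b) * (y * y) := by rw [hab]
      _ = b * (y * y) := by rw [hxab]
      _ = y := hby
  have hxy : x * y = y * y := by
    calc x * y = x * (b * (y * y)) := by rw [hby]
      _ = x * (b * y) * y := by noncomm_ring
      _ = y * y := by rw [hxby]
  refine ⟨?_, ?_, ?_⟩
  · show a * b * (x * y) ^ 2 = x * y
    simp only [pow_two]
    calc a * b * (x * y * (x * y)) = b * b * (y * y * (y * y)) := by rw [hxy, hab]
      _ = b * (b * (y * y)) * (y * y) := by noncomm_ring
      _ = b * y * (y * y) := by rw [hby]
      _ = b * (y * y) * y := by noncomm_ring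
      _ = y * y := by rw [hby]
      _ = x * y := hxy.symm
  · show x * y * (a * b) ^ 2 = a * b
    simp only [pow_two]
    calc x * y * (a * b * (a * b)) = y * y * (b * b * (b * b)) := by rw [hxy, hab]
      _ = y * (y * (b * b)) * (b * b) := by noncomm_ring
      _ = y * b * (b * b) := by rw [hyb]
      _ = y * (b * b) * b := by noncomm_ring
      _ = b * b := by rw [hyb]
      _ = a * b := hab.symm
  · have h : e * (a * b) * (x * y) = e * b * y := by
      calc e * (a * b) * (x * y) = e * (a * b) * (y * y) := by rw [hxy]
        _ = e * (b * b) * (y * y) := by rw [hab]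
        _ = e * (b * (b * (y * y))) := by noncomm_ring
        _ = e * (b * y) := by rw [hby]
        _ = e * b * y := by noncomm_ring
    rw [h, hsy]
end

section
/- Let e be an invertible Hermitian element and let a, b be e-weighted core invertible with e-weighted core inverses x and y, and assume ab = b². Then a·x·y·(b·a·x)² = b·a·x, e·b·a·x·(a·x·y)² = e·y, and (e·b·a·x·y)* = e·b·a·x·y. -/
variable {R : Type*} [Ring R] [StarRing R]

theorem stmt15 (e a b x y : R) (he : IsUnit e) (hes : star e = e)
    (ha : IsWeightedCoreInverse e a x) (hb : IsWeightedCoreInverse e b y)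
    (hab : a * b = b ^ 2) :
    a * x * y * (b * a * x) ^ 2 = b * a * x ∧
    e * b * a * x * (a * x * y) ^ 2 = e * y ∧
    star (e * b * a * x * y) = e * b * a * x * y := by
  obtain ⟨h1, h2, h3⟩ := ha
  obtain ⟨k1, k2, k3⟩ := hb
  rw [sq, ← mul_assoc] at h1 h2 k1 k2
  rw [sq] at hab
  have h1' : ∀ c : R, a * (x * (x * c)) = x * c := fun c => by
    rw [← mul_assoc, ← mul_assoc, h1]
  have h2' : ∀ c : R, x * (a * (a * c)) = a * c := fun c => by
    rw [← mul_assoc, ← mul_assoc, h2]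
  have k1' : ∀ c : R, b * (y * (y * c)) = y * c := fun c => by
    rw [← mul_assoc, ← mul_assoc, k1]
  have k2' : ∀ c : R, y * (b * (b * c)) = b * c := fun c => by
    rw [← mul_assoc, ← mul_assoc, k2]
  have hab' : ∀ c : R, a * (b * c) = b * (b * c) := fun c => by
    rw [← mul_assoc, ← mul_assoc, hab]
  have axa' : ∀ c : R, a * (x * (a * c)) = a * c := fun c => by
    rw [← h2' c, h1']
  have byb' : ∀ c : R, b * (y * (b * c)) = b * c := fun c => by
    rw [← k2' c, k1']
  have ay' : ∀ c : R, a * (y * c) = b * (y * c) := fun c => by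
    rw [← k1' c, hab']
  have ayb' : ∀ c : R, a * (y * (b * c)) = b * c := fun c => by
    rw [← byb' c, ay', byb']
  have axb' : ∀ c : R, a * (x * (b * c)) = b * c := fun c => by
    rw [← ayb' c, axa']
  have axy' : ∀ c : R, a * (x * (y * c)) = y * c := fun c => by
    rw [← k1' c, axb']
  have axy0 : a * (x * y) = y := by
    rw [← k1, mul_assoc b y y, axb']
  refine ⟨?_, ?_, ?_⟩
  · simp only [sq, mul_assoc]
    rw [axy', axb', k2']
  · simp only [sq, mul_assoc]
    rw [axy', axy', axy0, mul_assoc] at *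
    rw [k1]
  · have h : e * b * a * x * y = e * b * y := by
      simp only [mul_assoc]; rw [axy0]
    rw [h, k3]
end

section
/- Let a, b be core invertible with core inverses x, y, and suppose ab is Moore–Penrose invertible with Moore–Penrose inverse p. Then p = x·y if and only if ab ∈ bR and x·b = p·b². -/
variable {R : Type*} [Ring R] [StarRing R]

def IsMPInverse (c p : R) : Prop :=
  c * p * c = c ∧ p * c * p = p ∧ star (c * p) = c * p ∧ star (p * c) = p * c

theorem stmt16 (a b x y p : R) (ha : IsCoreInverse a x) (hb : IsCoreInverse b y)
    (hp : IsMPInverse (a * b) p) :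
    p = x * y ↔ (∃ r : R, a * b = b * r) ∧ x * b = p * b ^ 2 := by
  obtain ⟨hb1, hb2, hb3, hb4, hb5⟩ := hb
  have h5 : b * (y * y) = y := by rw [← pow_two]; exact hb5
  have h4 : y * (b * b) = b := by rw [← pow_two]; exact hb4
  constructor
  · intro h
    subst h
    obtain ⟨hp1, hp2, hp3, hp4⟩ := hp
    constructor
    · -- a*b ∈ bR
      have hy : star y * star b = b * y := by rw [← star_mul, hb3]
      have hy2 : star y = b * y * star y := by
        conv_lhs => rw [← hb2]
        rw [star_mul, star_mul, ← mul_assoc, hy]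
      have k1 : a * b * (x * y) = b * (y * (star y * (star x * (star b * star a)))) := by
        calc a * b * (x * y) = star (a * b * (x * y)) := hp3.symm
          _ = star y * (star x * (star b * star a)) := by
              simp only [star_mul, mul_assoc]
          _ = b * y * star y * (star x * (star b * star a)) := by rw [← hy2]
          _ = b * (y * (star y * (star x * (star b * star a)))) := by noncomm_ring
      have k2 : b * y * (a * b * (x * y)) = a * b * (x * y) := by
        rw [k1, ← mul_assoc, ← mul_assoc, hb1, mul_assoc]
      refine ⟨y * (a * b), ?_⟩
      calc a * b = a * b * (x * y) * (a * b) := hp1.symm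
        _ = b * y * (a * b * (x * y)) * (a * b) := by rw [k2]
        _ = b * y * (a * b * (x * y) * (a * b)) := by noncomm_ring
        _ = b * y * (a * b) := by rw [hp1]
        _ = b * (y * (a * b)) := by noncomm_ring
    · -- x*b = p*b^2
      rw [mul_assoc, hb4]
  · rintro ⟨⟨r, hr⟩, hxb⟩
    obtain ⟨hp1, hp2, hp3, hp4⟩ := hp
    have hby : b * y * (a * b) = a * b := by
      rw [hr, ← mul_assoc, hb1]
    have hxy : x * y = p * (b * y) := by
      calc x * y = x * (b * (y * y)) := by rw [h5]
        _ = x * b * (y * y) := by noncomm_ring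
        _ = p * b ^ 2 * (y * y) := by rw [hxb]
        _ = p * (b * (b * (y * y))) := by rw [pow_two]; noncomm_ring
        _ = p * (b * y) := by rw [h5]
    have h1 : b * y * (a * b * p) = a * b * p := by
      rw [← mul_assoc, hby]
    have habp : a * b * p * (b * y) = a * b * p := by
      have h2 := congrArg star h1
      rwa [star_mul, hp3, hb3] at h2
    have habxy : a * b * (x * y) = a * b * p := by
      rw [hxy, ← mul_assoc, habp]
    have hpab : x * y * (a * b) = p * (a * b) := by
      rw [hxy, mul_assoc, hby]
    have e2 : x * y * (a * b) * (x * y) = x * y := by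
      rw [hpab, hxy, ← mul_assoc, hp2]
    calc p = p * (a * b) * p := hp2.symm
      _ = p * (a * b * p) := by noncomm_ring
      _ = p * (a * b * (x * y)) := by rw [habxy]
      _ = x * y * (a * b) * (x * y) := by rw [← mul_assoc, ← hpab]
      _ = x * y := e2
end

section
/- Let a, b be core invertible with core inverses x, y, and suppose ab is Moore–Penrose invertible with Moore–Penrose inverse p. Then p = x·y if and only if ab ∈ Ra* and a*·y = a*·a·p. -/
variable {R : Type*} [Ring R] [StarRing R]

theorem stmt17 (a b x y p : R) (ha : IsCoreInverse a x) (hb : IsCoreInverse b y)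
    (hp : IsMPInverse (a * b) p) :
    p = x * y ↔ (∃ r : R, a * b = r * star a) ∧ star a * y = star a * a * p := by
  obtain ⟨ha1, ha2, ha3, ha4, ha5⟩ := ha
  obtain ⟨hp1, hp2, hp3, hp4⟩ := hp
  -- star a * (a * x) = star a
  have haa : star a * (a * x) = star a := by
    calc star a * (a * x) = star a * star (a * x) := by rw [ha3]
      _ = star (a * x * a) := by rw [← star_mul]
      _ = star a := by rw [ha1]
  -- star x * star a = a * x
  have hxa : star x * star a = a * x := by rw [← star_mul, ha3]
  -- star x = star x * star x * star a
  have hxr : star x = star x * star x * star a := by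
    calc star x = star (a * x ^ 2) := by rw [ha5]
      _ = star (x ^ 2) * star a := by rw [star_mul]
      _ = star x * star x * star a := by rw [sq, star_mul]
  constructor
  · intro h
    constructor
    · refine ⟨a * b * star b * star a * star y * star x * star x, ?_⟩
      have hpab : p * (a * b) = star b * star a * star p := by
        rw [← hp4, star_mul, star_mul, mul_assoc]
      calc a * b = a * b * p * (a * b) := hp1.symm
        _ = a * b * (p * (a * b)) := by rw [mul_assoc]
        _ = a * b * (star b * star a * star p) := by rw [hpab]
        _ = a * b * (star b * star a * (star y * star x)) := by rw [h, star_mul]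
        _ = a * b * (star b * star a * (star y * (star x * star x * star a))) := by
              rw [← hxr]
        _ = a * b * star b * star a * star y * star x * star x * star a := by
              simp only [mul_assoc]
    · rw [h]
      calc star a * y = star a * (a * x) * y := by rw [haa]
        _ = star a * a * (x * y) := by simp only [mul_assoc]
  · rintro ⟨⟨r, h1⟩, h2⟩
    -- p = a * (star r * star p * p)
    have hPa : p = a * (star r * star p * p) := by
      have hpc : p * (a * b) = a * star r * star p := by
        rw [← hp4, star_mul, h1, star_mul, star_star, mul_assoc]
      calc p = p * (a * b) * p := hp2.symm
        _ = a * star r * star p * p := by rw [hpc]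
        _ = a * (star r * star p * p) := by simp only [mul_assoc]
    -- x * (a * p) = p
    have xap : x * (a * p) = p := by
      calc x * (a * p) = x * (a * (a * (star r * star p * p))) := by rw [← hPa]
        _ = x * a ^ 2 * (star r * star p * p) := by rw [sq]; simp only [mul_assoc]
        _ = a * (star r * star p * p) := by rw [ha4]
        _ = p := hPa.symm
    -- a * (x * y) = a * p
    have axy : a * (x * y) = a * p := by
      have h3 : star x * (star a * y) = star x * (star a * a * p) := by rw [h2]
      calc a * (x * y) = a * x * y := by rw [mul_assoc]
        _ = star x * star a * y := by rw [hxa]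
        _ = star x * (star a * y) := by rw [mul_assoc]
        _ = star x * (star a * a * p) := h3
        _ = star x * star a * a * p := by simp only [mul_assoc]
        _ = a * x * a * p := by rw [hxa]
        _ = a * p := by rw [ha1]
    calc p = x * (a * p) := xap.symm
      _ = x * (a * (x * y)) := by rw [axy]
      _ = x * a * x * y := by simp only [mul_assoc]
      _ = x * y := by rw [ha2]
end

section
/- If a is core invertible with core inverse x and e ∈ R satisfies ea = ae and ea* = a*e, then ex = xe. -/
variable {R : Type*} [Ring R] [StarRing R]

theorem stmt19 (a x e : R) (h : IsCoreInverse a x)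
    (h1 : e * a = a * e) (h2 : e * star a = star a * e) :
    e * x = x * e := by
  obtain ⟨h3, h4, h5, h6, h7⟩ := h
  -- basic re-associated forms
  have b6 : x*(a*a) = a := by rw [← pow_two, h6]
  have h6' : x*a*a = a := by rw [mul_assoc]; exact b6
  have b7 : a*(x*x) = x := by rw [← pow_two, h7]
  have h7' : a*x*x = x := by rw [mul_assoc]; exact b7
  have b3 : a*(x*a) = a := by rw [← mul_assoc]; exact h3
  have b4 : x*(a*x) = x := by rw [← mul_assoc]; exact h4
  -- generalized rewrite rules
  have r1 : ∀ y : R, e*(a*y) = a*(e*y) := fun y => by rw [← mul_assoc, h1, mul_assoc]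
  have r2 : ∀ y : R, star a*(e*y) = e*(star a*y) := fun y => by
    rw [← mul_assoc, ← h2, mul_assoc]
  have r3 : ∀ y : R, a*(x*(a*y)) = a*y := fun y => by
    rw [← mul_assoc, ← mul_assoc, h3]
  have r4 : ∀ y : R, x*(a*(x*y)) = x*y := fun y => by
    rw [← mul_assoc, ← mul_assoc, h4]
  have r6 : ∀ y : R, x*(a*(a*y)) = a*y := fun y => by
    rw [← mul_assoc, ← mul_assoc, h6']
  -- star facts
  have hpstar : star x * star a = a * x := by rw [← star_mul, h5]
  have hap : star a * (a * x) = star a := by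
    conv_lhs => rw [← h5]
    rw [← star_mul, h3]
  -- Step 1: e commutes with p = a*x
  have ep1 : e*(a*x) = a*(e*x) := r1 x
  have pep1 : (a*x)*(e*(a*x)) = a*(e*x) := by
    rw [ep1, mul_assoc, r3]
  have pe : (a*x)*e = star x*(e*star a) := by
    rw [← hpstar, mul_assoc, ← h2]
  have pep2 : ((a*x)*e)*(a*x) = star x*(e*star a) := by
    rw [pe, mul_assoc, mul_assoc e, hap]
  have E1 : e*(a*x) = (a*x)*e :=
    (ep1.trans pep1.symm).trans (((mul_assoc _ _ _).symm).trans (pep2.trans pe.symm))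
  -- facts about f = x*a and g = x*(x*a)
  have hfg : (x*a)*(x*(x*a)) = x*(x*a) := by rw [mul_assoc, r4]
  have hgf : (x*(x*a))*(x*a) = x*(x*a) := by
    simp only [mul_assoc]; rw [b3]
  have hag : a*(x*(x*a)) = x*a := by
    simp only [← mul_assoc]; rw [h7']
  have hga : (x*(x*a))*a = x*a := by
    simp only [mul_assoc]; rw [b6]
  -- Step 2: e commutes with f = x*a
  have ef1 : e*(x*a) = a*(e*(x*(x*a))) := by
    conv_lhs => rw [← hag]
    exact r1 _
  have fe : (x*a)*e = (x*(x*a))*(a*e) := by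
    conv_rhs => rw [← mul_assoc, hga]
  have fe2 : ((x*(x*a))*(a*e))*(x*a) = (x*(x*a))*(a*e) := by
    rw [mul_assoc, ← h1, mul_assoc e, b3]
  have fe3 : ((x*(x*a))*(a*e))*(x*a) = a*(e*(x*(x*a))) := by
    simp only [mul_assoc]
    rw [ef1, r6, r6]
  have E2 : e*(x*a) = (x*a)*e := by
    rw [ef1, ← fe3, fe2, fe]
  -- Step 3: e commutes with g = x*(x*a)
  have E3 : e*(x*(x*a)) = (x*(x*a))*e := by
    calc e*(x*(x*a)) = e*((x*a)*(x*(x*a))) := by rw [hfg]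
      _ = (e*(x*a))*(x*(x*a)) := (mul_assoc _ _ _).symm
      _ = ((x*a)*e)*(x*(x*a)) := by rw [E2]
      _ = (((x*(x*a))*a)*e)*(x*(x*a)) := by rw [hga]
      _ = (x*(x*a))*((a*e)*(x*(x*a))) := by simp only [mul_assoc]
      _ = (x*(x*a))*((e*a)*(x*(x*a))) := by rw [← h1]
      _ = (x*(x*a))*(e*(a*(x*(x*a)))) := by rw [mul_assoc e a]
      _ = (x*(x*a))*(e*(x*a)) := by rw [hag]
      _ = (x*(x*a))*((x*a)*e) := by rw [E2]
      _ = ((x*(x*a))*(x*a))*e := (mul_assoc _ _ _).symm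
      _ = (x*(x*a))*e := by rw [hgf]
  -- Step 4: conclude, using x = g*p
  have hx : (x*(x*a))*(a*x) = x := by
    simp only [mul_assoc]
    rw [r6, b4]
  calc e*x = e*((x*(x*a))*(a*x)) := by rw [hx]
    _ = (e*(x*(x*a)))*(a*x) := (mul_assoc _ _ _).symm
    _ = ((x*(x*a))*e)*(a*x) := by rw [E3]
    _ = (x*(x*a))*(e*(a*x)) := by rw [mul_assoc]
    _ = (x*(x*a))*((a*x)*e) := by rw [E1]
    _ = ((x*(x*a))*(a*x))*e := (mul_assoc _ _ _).symm
    _ = x*e := by rw [hx]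
end
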